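/- If ρ < 1, then f(x) ≤ 1/2 for every x ∈ [0, 1/2]; that is, the minority can never become the majority under the deterministic dynamics. -/

import Mathlib

/-!
With `p = aα` and `q = bβ`, twice the numerator of `Γ x` differs from its denominator by
`p (x² - (1 - x)²) = p (2x - 1)`, so `Γ x ≤ 1/2` exactly when `x ≤ 1/2`.
The update `f x` is a convex combination of `x` and `Γ x`, hence also at most `1/2`.
-/

lemma opinion_denom_pos {p q x : ℝ} (hp : 0 < p) (hq : 0 ≤ q) (hx : x ∈ Set.Icc (0 : ℝ) 1) :
    0 < p * x ^ 2 + 2 * q * x * (1 - x) + p * (1 - x) ^ 2 := by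
  obtain ⟨hx0, hx1⟩ := hx
  have hmix : 0 ≤ 2 * q * x * (1 - x) := by
    have : 0 ≤ 1 - x := by linarith
    positivity
  have hsq : 0 < x ^ 2 + (1 - x) ^ 2 := by nlinarith [sq_nonneg (2 * x - 1)]
  nlinarith

lemma opinion_ratio_le_half {p q x : ℝ} (hp : 0 < p) (hq : 0 ≤ q) (hx0 : 0 ≤ x)
    (hx : x ≤ 1 / 2) :
    (p * x ^ 2 + q * x * (1 - x)) / (p * x ^ 2 + 2 * q * x * (1 - x) + p * (1 - x) ^ 2)
      ≤ 1 / 2 := by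
  have hD := opinion_denom_pos hp hq ⟨hx0, by linarith⟩
  have hgap : 2 * (p * x ^ 2 + q * x * (1 - x))
      = (p * x ^ 2 + 2 * q * x * (1 - x) + p * (1 - x) ^ 2) + p * (2 * x - 1) := by ring
  rw [div_le_iff₀ hD]
  nlinarith

lemma div_one_add_le_of_le {x y c t : ℝ} (ht : 0 ≤ t) (hx : x ≤ c) (hy : y ≤ c) :
    (x + t * y) / (1 + t) ≤ c := by
  rw [div_le_iff₀ (by linarith)]
  nlinarith

theorem stmt_6_general (a b α β lam : ℝ) (ha : 0 < a) (hb : 0 < b) (hα : 0 < α) (hβ : 0 < β)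
    (hlam : 0 < lam) (Γ f : ℝ → ℝ)
    (hΓ : ∀ x ∈ Set.Icc (0:ℝ) 1, Γ x =
      (a * α * x ^ 2 + b * β * x * (1 - x)) /
        (a * α * x ^ 2 + 2 * b * β * x * (1 - x) + a * α * (1 - x) ^ 2))
    (hf : ∀ x ∈ Set.Icc (0:ℝ) 1, f x = (x + lam * Γ x) / (1 + lam)) :
    ∀ x ∈ Set.Icc (0:ℝ) (1 / 2), f x ≤ 1 / 2 := by
  rintro x ⟨hx0, hx⟩
  have hx1 : x ∈ Set.Icc (0:ℝ) 1 := ⟨hx0, by linarith⟩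
  have hΓx : Γ x ≤ 1 / 2 := by
    rw [hΓ x hx1, mul_assoc 2 b β]
    exact opinion_ratio_le_half (mul_pos ha hα) (mul_pos hb hβ).le hx0 hx
  rw [hf x hx1]
  exact div_one_add_le_of_le hlam.le hx hΓx

/-- If `ρ < 1`, then `f(x) ≤ 1/2` for every `x ∈ [0, 1/2]`: the minority can never become
the majority under the deterministic dynamics. -/
theorem stmt_6 (a b α β lam : ℝ) (ha : 0 < a) (hb : 0 < b) (hα : 0 < α) (hβ : 0 < β)
    (hlam : 0 < lam) (Γ f : ℝ → ℝ)
    (hΓ : ∀ x ∈ Set.Icc (0:ℝ) 1, Γ x =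
      (a * α * x ^ 2 + b * β * x * (1 - x)) /
        (a * α * x ^ 2 + 2 * b * β * x * (1 - x) + a * α * (1 - x) ^ 2))
    (hf : ∀ x ∈ Set.Icc (0:ℝ) 1, f x = (x + lam * Γ x) / (1 + lam))
    (ρ : ℝ) (hρ : ρ = a * α / (b * β)) (hρ1 : ρ < 1) :
    ∀ x ∈ Set.Icc (0:ℝ) (1 / 2), f x ≤ 1 / 2 :=
  stmt_6_general a b α β lam ha hb hα hβ hlam Γ f hΓ hf
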